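/- arXiv:1905.12173 — 6 statements merged into one kernel-verified Lean document; each statement's English description precedes it below -/
import Mathlib

section
/- The function u ↦ (2·κ(1) − 2·κ(u))/(2 − 2u) tends to +∞ as u tends to 1 from the left (i.e., along the filter of neighborhoods of 1 within the interval [−1, 1)). Consequently the squared distance between NTK feature maps of unit vectors, divided by the squared distance between the vectors, is unbounded. -/
open Real Filter

noncomputable def kappa0 (u : ℝ) : ℝ := (π - Real.arccos u) / π
noncomputable def kappa1 (u : ℝ) : ℝ :=
  (u * (π - Real.arccos u) + Real.sqrt (1 - u ^ 2)) / π
noncomputable def kappa (u : ℝ) : ℝ := u * kappa0 u + kappa1 u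

/-! Since `arccos u ≥ sin (arccos u) = √(1 - u²)`, for `u` near `1` the gap
`2κ(1) - 2κ(u) = (4π(1 - u) + 4u arccos u - 2√(1 - u²)) / π` is at least
`(4u - 2)√(1 - u²) / π ≥ √(1 - u) / π`, so the quotient is at least `1 / (2π√(1 - u))`. -/

open Topology

lemma tendsto_inv_sqrt_one_sub_nhdsLT_one :
    Tendsto (fun u : ℝ => (√(1 - u))⁻¹) (𝓝[<] 1) atTop := by
  have hgap : Tendsto (fun u : ℝ => 1 - u) (𝓝[<] 1) (𝓝[>] 0) := by
    refine tendsto_nhdsWithin_of_tendsto_nhds_of_eventually_within _ ?_ ?_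
    · simpa using ((continuous_sub_left (1 : ℝ)).tendsto 1).mono_left nhdsWithin_le_nhds
    · filter_upwards [self_mem_nhdsWithin] with u (hu : u < 1) using sub_pos.mpr hu
  have := tendsto_sqrt_atTop.comp (tendsto_inv_nhdsGT_zero.comp hgap)
  simpa only [Function.comp_def, Real.sqrt_inv] using this

lemma sqrt_one_sub_sq_le_arccos (u : ℝ) : √(1 - u ^ 2) ≤ arccos u :=
  sin_arccos u ▸ sin_le (arccos_nonneg u)

lemma kappa_eq (u : ℝ) : kappa u = (2 * u * (π - arccos u) + √(1 - u ^ 2)) / π := by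
  unfold kappa kappa0 kappa1
  field_simp
  ring

lemma kappa_one : kappa 1 = 2 := by
  rw [kappa_eq, arccos_one]
  field_simp
  norm_num

lemma kappa_gap_eq (u : ℝ) :
    2 * kappa 1 - 2 * kappa u = (4 * π * (1 - u) + 4 * u * arccos u - 2 * √(1 - u ^ 2)) / π := by
  rw [kappa_one, kappa_eq]
  field_simp
  ring

lemma sqrt_one_sub_div_pi_le_kappa_gap {u : ℝ} (hu : 3 / 4 ≤ u) (hu1 : u ≤ 1) :
    √(1 - u) / π ≤ 2 * kappa 1 - 2 * kappa u := by
  rw [kappa_gap_eq]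
  gcongr
  have hsqrt : √(1 - u) ≤ √(1 - u ^ 2) := Real.sqrt_le_sqrt (by nlinarith)
  nlinarith [sqrt_one_sub_sq_le_arccos u, sqrt_nonneg (1 - u ^ 2), pi_pos]

lemma inv_sqrt_le_kappa_gap_div {u : ℝ} (hu : 3 / 4 ≤ u) (hu1 : u < 1) :
    (2 * π)⁻¹ * (√(1 - u))⁻¹ ≤ (2 * kappa 1 - 2 * kappa u) / (2 - 2 * u) := by
  calc (2 * π)⁻¹ * (√(1 - u))⁻¹ = √(1 - u) / π / (2 - 2 * u) := by
        rw [show 2 - 2 * u = 2 * √(1 - u) ^ 2 by rw [sq_sqrt (sub_pos.mpr hu1).le]; ring]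
        field_simp
    _ ≤ (2 * kappa 1 - 2 * kappa u) / (2 - 2 * u) := by
        gcongr
        · linarith
        · exact sqrt_one_sub_div_pi_le_kappa_gap hu hu1.le

theorem ntk_not_lipschitz_limit :
    Tendsto (fun u : ℝ => (2 * kappa 1 - 2 * kappa u) / (2 - 2 * u))
      (nhdsWithin 1 (Set.Ico (-1 : ℝ) 1)) atTop := by
  have hfilter : nhdsWithin 1 (Set.Ico (-1 : ℝ) 1) ≤ 𝓝[<] 1 :=
    nhdsWithin_mono _ Set.Ico_subset_Iio_self
  have hlower : Tendsto (fun u : ℝ => (2 * π)⁻¹ * (√(1 - u))⁻¹) (𝓝[<] 1) atTop :=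
    tendsto_inv_sqrt_one_sub_nhdsLT_one.const_mul_atTop (by positivity)
  refine tendsto_atTop_mono' _ ?_ (hlower.mono_left hfilter)
  filter_upwards [hfilter (Ioo_mem_nhdsLT (by norm_num : (3 / 4 : ℝ) < 1))] with u hu
  exact inv_sqrt_le_kappa_gap_div hu.1.le hu.2
end

section
/- Let H be a real inner product space and let x, y ∈ H be nonzero. Then 2 − 2·κ₀( ⟨x, y⟩ / (‖x‖·‖y‖) ) ≤ ‖x − y‖ / min(‖x‖, ‖y‖). This expresses that the (0-homogeneous) kernel mapping φ₀ of the arc-cosine-0 kernel satisfies ‖φ₀(x) − φ₀(y)‖ ≤ √( ‖x − y‖ / min(‖x‖, ‖y‖) ), since ‖φ₀(x) − φ₀(y)‖² = 2 − 2κ₀(⟨x,y⟩/(‖x‖‖y‖)). -/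
/-!
With `θ` the angle between `x` and `y`, the argument of `κ₀` is `cos θ` and the left-hand side
is `2θ/π`. Jordan's inequality `2t/π ≤ sin t` on `[0, π/2]` bounds this by the chord
`2 sin (θ/2) = √(2 - 2 cos θ)`, and the law of cosines shows that `min ‖x‖ ‖y‖` times this chord
is at most `‖x - y‖`.
-/

open Real

open InnerProductGeometry

theorem two_sub_two_mul_kappa0_eq_two_div_pi_mul_angle {V : Type*} [NormedAddCommGroup V]
    [InnerProductSpace ℝ V] (x y : V) :
    2 - 2 * kappa0 (inner ℝ x y / (‖x‖ * ‖y‖)) = 2 / π * angle x y := by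
  rw [kappa0, ← angle]
  field_simp
  ring

theorem two_div_pi_mul_le_two_mul_sin_half {θ : ℝ} (h₀ : 0 ≤ θ) (hπ : θ ≤ π) :
    2 / π * θ ≤ 2 * sin (θ / 2) := by
  have := mul_le_sin (x := θ / 2) (by linarith) (by linarith)
  linarith

theorem sq_two_mul_sin_half (θ : ℝ) : (2 * sin (θ / 2)) ^ 2 = 2 - 2 * cos θ := by
  have hθ : cos θ = cos (2 * (θ / 2)) := by ring_nf
  rw [hθ, cos_two_mul]
  nlinarith [sin_sq_add_cos_sq (θ / 2)]

theorem norm_mul_two_mul_sin_half_angle_le_norm_sub {V : Type*} [NormedAddCommGroup V]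
    [InnerProductSpace ℝ V] {x y : V} (h : ‖x‖ ≤ ‖y‖) :
    ‖x‖ * (2 * sin (angle x y / 2)) ≤ ‖x - y‖ := by
  refine le_of_sq_le_sq ?_ (norm_nonneg _)
  set a := ‖x‖
  set b := ‖y‖
  set c := cos (angle x y)
  have hc : c ≤ 1 := cos_le_one _
  have ha : 0 ≤ a := norm_nonneg _
  -- the difference of the two sides is `(b - a) * (b + a - 2 * a * c)`
  calc (a * (2 * sin (angle x y / 2))) ^ 2 = a ^ 2 * (2 - 2 * c) := by
        rw [mul_pow, sq_two_mul_sin_half]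
    _ ≤ a * a + b * b - 2 * a * b * c := by
        nlinarith [mul_nonneg (sub_nonneg.2 h) (by nlinarith : 0 ≤ b + a - 2 * a * c)]
    _ = ‖x - y‖ ^ 2 := by
        rw [sq, norm_sub_sq_eq_norm_sq_add_norm_sq_sub_two_mul_norm_mul_norm_mul_cos_angle]

theorem min_norm_mul_two_mul_sin_half_angle_le_norm_sub {V : Type*} [NormedAddCommGroup V]
    [InnerProductSpace ℝ V] (x y : V) :
    min ‖x‖ ‖y‖ * (2 * sin (angle x y / 2)) ≤ ‖x - y‖ := by
  rcases le_total ‖x‖ ‖y‖ with h | h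
  · rw [min_eq_left h]
    exact norm_mul_two_mul_sin_half_angle_le_norm_sub h
  · rw [min_eq_right h, angle_comm, norm_sub_rev]
    exact norm_mul_two_mul_sin_half_angle_le_norm_sub h

theorem phi0_homogeneous_holder {H : Type*} [NormedAddCommGroup H]
    [InnerProductSpace ℝ H] (x y : H) (hx : x ≠ 0) (hy : y ≠ 0) :
    2 - 2 * kappa0 ((inner ℝ x y : ℝ) / (‖x‖ * ‖y‖)) ≤ ‖x - y‖ / min ‖x‖ ‖y‖ := by
  have hmin : 0 < min ‖x‖ ‖y‖ := lt_min (norm_pos_iff.mpr hx) (norm_pos_iff.mpr hy)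
  rw [two_sub_two_mul_kappa0_eq_two_div_pi_mul_angle, le_div_iff₀' hmin]
  calc min ‖x‖ ‖y‖ * (2 / π * angle x y)
      ≤ min ‖x‖ ‖y‖ * (2 * sin (angle x y / 2)) :=
        mul_le_mul_of_nonneg_left
          (two_div_pi_mul_le_two_mul_sin_half (angle_nonneg x y) (angle_le_pi x y)) hmin.le
    _ ≤ ‖x - y‖ := min_norm_mul_two_mul_sin_half_angle_le_norm_sub x y
end

section
/- Let H be a real inner product space and let x, y ∈ H be nonzero. Then ‖x‖² + ‖y‖² − 2·‖x‖·‖y‖·κ₁( ⟨x, y⟩ / (‖x‖·‖y‖) ) ≤ ‖x − y‖². This expresses that the kernel mapping of the homogeneous arc-cosine-1 kernel K₁(x, y) = ‖x‖·‖y‖·κ₁(⟨x,y⟩/(‖x‖‖y‖)) is non-expansive: K₁(x,x) + K₁(y,y) − 2K₁(x,y) ≤ ‖x − y‖². -/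
open Real

/- For `0 < u ≤ 1` this is `θ cos θ ≤ sin θ` at `θ = arccos u ∈ [0, π/2)`; outside `[-1, 1]` the
junk values `arccos u ∈ {0, π}` make it trivial. -/
theorem mul_arccos_le_sqrt_one_sub_sq (u : ℝ) : u * arccos u ≤ √(1 - u ^ 2) := by
  rcases le_or_gt u 0 with hu | hu
  · exact (mul_nonpos_of_nonpos_of_nonneg hu (arccos_nonneg u)).trans (sqrt_nonneg _)
  rcases le_or_gt u 1 with hu1 | hu1
  · have hθ : arccos u ≤ tan (arccos u) :=
      le_tan (arccos_nonneg u) (arccos_lt_pi_div_two.2 hu)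
    rw [tan_eq_sin_div_cos, cos_arccos (by linarith) hu1, sin_arccos, le_div_iff₀ hu] at hθ
    linarith
  · simp [arccos_eq_zero.2 hu1.le]

theorem le_kappa1 (u : ℝ) : u ≤ kappa1 u := by
  rw [kappa1, le_div_iff₀ pi_pos]
  linarith [mul_arccos_le_sqrt_one_sub_sq u]

theorem le_mul_kappa1_div {a r : ℝ} (h : |a| ≤ r) : a ≤ r * kappa1 (a / r) := by
  rcases (abs_nonneg a).trans h |>.eq_or_lt with hr | hr
  · subst hr
    simp [abs_nonpos_iff.1 h]
  · calc a = r * (a / r) := (mul_div_cancel₀ a hr.ne').symm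
      _ ≤ r * kappa1 (a / r) := mul_le_mul_of_nonneg_left (le_kappa1 _) hr.le

theorem phi1_homogeneous_nonexpansive_general {H : Type*} [NormedAddCommGroup H]
    [InnerProductSpace ℝ H] (x y : H) :
    ‖x‖ ^ 2 + ‖y‖ ^ 2
        - 2 * ‖x‖ * ‖y‖ * kappa1 ((inner ℝ x y : ℝ) / (‖x‖ * ‖y‖))
      ≤ ‖x - y‖ ^ 2 := by
  have hK := le_mul_kappa1_div (abs_real_inner_le_norm x y)
  rw [norm_sub_sq_real]
  linarith

theorem phi1_homogeneous_nonexpansive {H : Type*} [NormedAddCommGroup H]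
    [InnerProductSpace ℝ H] (x y : H) (hx : x ≠ 0) (hy : y ≠ 0) :
    ‖x‖ ^ 2 + ‖y‖ ^ 2
        - 2 * ‖x‖ * ‖y‖ * kappa1 ((inner ℝ x y : ℝ) / (‖x‖ * ‖y‖))
      ≤ ‖x - y‖ ^ 2 :=
  phi1_homogeneous_nonexpansive_general x y
end

section
/- Let d ≥ 1, let 0 ≤ c < 1, and let τ : ℝ^d → ℝ^d be differentiable with ‖Dτ(u)‖ ≤ c (operator norm of the derivative) for all u ∈ ℝ^d. Then for every measurable function f : ℝ^d → ℝ with ∫ f(u)² du < ∞, one has ∫ f(u − τ(u))² du ≤ (1 − c)^{−d} · ∫ f(u)² du. In particular, for ‖Dτ‖_∞ ≤ 1/2 this gives ∫ f(u − τ(u))² du ≤ 2^d · ∫ f(u)² du. -/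
/-!
The map `φ u = u - τ u` is injective, since `τ` is a contraction by the mean value inequality,
and `Dφ = I - Dτ` stretches every vector by a factor at least `1 - c`. Hence `Dφ` maps the unit
ball onto a set containing the ball of radius `1 - c`, so `|det Dφ| ≥ (1 - c) ^ d`. The change of
variables formula then gives `(1 - c) ^ d ∫ f (φ u) ^ 2 ≤ ∫_{φ(ℝ^d)} f ^ 2 ≤ ∫ f ^ 2`.
-/

open MeasureTheory Module Function

section

variable {E : Type*} [NormedAddCommGroup E] [NormedSpace ℝ E]

theorem injective_sub_of_norm_fderiv_le {τ : E → E} (hτ : Differentiable ℝ τ) {c : ℝ}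
    (hc : c < 1) (hDτ : ∀ u, ‖fderiv ℝ τ u‖ ≤ c) : Injective fun u => u - τ u := by
  have hlip : LipschitzWith c.toNNReal τ := lipschitzWith_of_nnnorm_fderiv_le hτ fun u => by
    simpa only [norm_toNNReal] using Real.toNNReal_le_toNNReal (hDτ u)
  simpa only [sub_eq_add_neg, id, Pi.neg_apply] using
    (AntilipschitzWith.id.add_lipschitzWith hlip.neg (by simpa using hc)).injective

variable [FiniteDimensional ℝ E]

theorem pow_finrank_le_abs_det_of_mul_norm_le {k : ℝ} (hk : 0 < k) (L : E →L[ℝ] E)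
    (hL : ∀ x, k * ‖x‖ ≤ ‖L x‖) : k ^ finrank ℝ E ≤ |L.det| := by
  let : MeasurableSpace E := borel E
  have : BorelSpace E := ⟨rfl⟩
  have hinj : Injective L := (injective_iff_map_eq_zero L).2 fun x hx => by
    have := hL x
    rw [hx, norm_zero] at this
    exact norm_le_zero_iff.1 (nonpos_of_mul_nonpos_right this hk)
  have hsurj : Surjective L := LinearMap.surjective_of_injective (f := (L : E →ₗ[ℝ] E)) hinj
  have himage : Metric.closedBall (0 : E) (k * 1) ⊆ L '' Metric.closedBall 0 1 := by
    intro y hy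
    obtain ⟨x, rfl⟩ := hsurj y
    rw [mem_closedBall_zero_iff] at hy
    exact ⟨x, mem_closedBall_zero_iff.2 (le_of_mul_le_mul_left ((hL x).trans hy) hk), rfl⟩
  have hvol := measure_mono (μ := Measure.addHaar) himage
  rw [Measure.addHaar_closedBall_mul _ _ hk.le zero_le_one,
    Measure.addHaar_image_continuousLinearMap] at hvol
  rwa [ENNReal.mul_le_mul_iff_left (Metric.measure_closedBall_pos _ _ one_pos).ne'
    measure_closedBall_lt_top.ne, ENNReal.ofReal_le_ofReal_iff (abs_nonneg _)] at hvol

theorem one_sub_pow_finrank_le_abs_det_id_sub {c : ℝ} (hc : c < 1) {A : E →L[ℝ] E}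
    (hA : ‖A‖ ≤ c) : (1 - c) ^ finrank ℝ E ≤ |(ContinuousLinearMap.id ℝ E - A).det| :=
  pow_finrank_le_abs_det_of_mul_norm_le (sub_pos.2 hc) _ fun x =>
    calc (1 - c) * ‖x‖ ≤ ‖x‖ - ‖A x‖ := by nlinarith [A.le_opNorm x, norm_nonneg x]
      _ ≤ ‖x - A x‖ := norm_sub_norm_le _ _

theorem ofReal_mul_lintegral_comp_le_of_le_abs_det [MeasurableSpace E] [BorelSpace E]
    (μ : Measure E) [μ.IsAddHaarMeasure] {φ : E → E} {φ' : E → E →L[ℝ] E}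
    (hφ : ∀ x, HasFDerivAt φ (φ' x) x) (hinj : Injective φ) {m : ℝ}
    (hdet : ∀ x, m ≤ |(φ' x).det|) (g : E → ENNReal) :
    ENNReal.ofReal m * ∫⁻ x, g (φ x) ∂μ ≤ ∫⁻ x, g x ∂μ := by
  have hcov := lintegral_image_eq_lintegral_abs_det_fderiv_mul μ MeasurableSet.univ
    (fun x _ => (hφ x).hasFDerivWithinAt) hinj.injOn g
  rw [Measure.restrict_univ] at hcov
  calc ENNReal.ofReal m * ∫⁻ x, g (φ x) ∂μ
      = ∫⁻ x, ENNReal.ofReal m * g (φ x) ∂μ :=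
        (lintegral_const_mul' _ _ ENNReal.ofReal_ne_top).symm
    _ ≤ ∫⁻ x, ENNReal.ofReal |(φ' x).det| * g (φ x) ∂μ :=
        lintegral_mono fun x => by gcongr; exact hdet x
    _ = ∫⁻ x in φ '' Set.univ, g x ∂μ := hcov.symm
    _ ≤ ∫⁻ x, g x ∂μ := setLIntegral_le_lintegral _ _

end

theorem deformation_l2_bound_general (d : ℕ) (c : ℝ) (hc1 : c < 1)
    (τ : EuclideanSpace ℝ (Fin d) → EuclideanSpace ℝ (Fin d))
    (hτ : Differentiable ℝ τ) (hDτ : ∀ u, ‖fderiv ℝ τ u‖ ≤ c)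
    (f : EuclideanSpace ℝ (Fin d) → ℝ) :
    ∫⁻ u, ENNReal.ofReal (f (u - τ u) ^ 2)
      ≤ (ENNReal.ofReal ((1 - c) ^ d))⁻¹ * ∫⁻ u, ENNReal.ofReal (f u ^ 2) := by
  have hpos : 0 < (1 - c) ^ d := pow_pos (sub_pos.2 hc1) d
  refine (ENNReal.mul_le_iff_le_inv (ENNReal.ofReal_pos.2 hpos).ne' ENNReal.ofReal_ne_top).1 ?_
  refine ofReal_mul_lintegral_comp_le_of_le_abs_det volume
    (fun u => (hasFDerivAt_id u).sub (hτ u).hasFDerivAt)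
    (injective_sub_of_norm_fderiv_le hτ hc1 hDτ) (fun u => ?_) (fun u => ENNReal.ofReal (f u ^ 2))
  simpa only [finrank_euclideanSpace_fin] using one_sub_pow_finrank_le_abs_det_id_sub hc1 (hDτ u)

theorem deformation_l2_bound (d : ℕ) (hd : 1 ≤ d) (c : ℝ) (hc0 : 0 ≤ c) (hc1 : c < 1)
    (τ : EuclideanSpace ℝ (Fin d) → EuclideanSpace ℝ (Fin d))
    (hτ : Differentiable ℝ τ) (hDτ : ∀ u, ‖fderiv ℝ τ u‖ ≤ c)
    (f : EuclideanSpace ℝ (Fin d) → ℝ) (hf : Measurable f)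
    (hf2 : ∫⁻ u, ENNReal.ofReal (f u ^ 2) < ⊤) :
    ∫⁻ u, ENNReal.ofReal (f (u - τ u) ^ 2)
      ≤ (ENNReal.ofReal ((1 - c) ^ d))⁻¹ * ∫⁻ u, ENNReal.ofReal (f u ^ 2) :=
  deformation_l2_bound_general d c hc1 τ hτ hDτ f
end

section
/- Let p ≥ 2, let μ be the standard Gaussian measure on ℝ^p (the p-fold product of the real Gaussian N(0,1)), and let x, y ∈ ℝ^p be unit vectors. Then μ({ w ∈ ℝ^p : ⟨w, x⟩ > 0 and ⟨w, y⟩ > 0 }) = (π − arccos⟨x, y⟩) / (2π). Equivalently, 2·E_{w∼μ}[𝟙{⟨w,x⟩>0}·𝟙{⟨w,y⟩>0}] = κ₀(⟨x, y⟩). -/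
open Real MeasureTheory ProbabilityTheory

/-- The standard Gaussian measure on `ℝ^p`, the `p`-fold product of `N(0,1)`. -/
noncomputable def stdGaussian (p : ℕ) : Measure (EuclideanSpace ℝ (Fin p)) :=
  (Measure.pi fun _ : Fin p => gaussianReal 0 1).map
    (MeasurableEquiv.toLp 2 (Fin p → ℝ))

/-!
Write `c = ⟪x, y⟫` and choose a unit vector `e ⊥ x` with `y = c • x + √(1 - c²) • e`. The
coordinates `(⟪x, w⟫, ⟪e, w⟫)` of a standard Gaussian vector `w` are again standard Gaussian on
`ℝ²` (compare characteristic functions), and the event becomes the wedge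
`{z | 0 < z.1 ∧ 0 < c * z.1 + √(1 - c²) * z.2}`, i.e. the sector of polar angles
`(arccos c - π / 2, π / 2)`. The planar Gaussian density is radial, so a sector has measure
its opening angle divided by `2π`.
-/

open Set
open scoped InnerProductSpace ENNReal

lemma lintegral_Ioi_mul_exp_neg_sq_div_two :
    ∫⁻ r in Ioi (0 : ℝ), ENNReal.ofReal (r * exp (-r ^ 2 / 2)) = 1 := by
  have hform : ∀ r : ℝ, -r ^ 2 / 2 = -(1 / 2) * r ^ 2 := fun r ↦ by ring
  have hint : ∫ r in Ioi (0 : ℝ), r * exp (-r ^ 2 / 2) = 1 := by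
    rw [← Complex.ofReal_inj, ← integral_complex_ofReal]
    push_cast
    simp_rw [show ∀ r : ℂ, -r ^ 2 / 2 = -(1 / 2) * r ^ 2 from fun r ↦ by ring]
    rw [integral_mul_cexp_neg_mul_sq (by norm_num)]
    norm_num
  rw [← ofReal_integral_eq_lintegral_ofReal, hint, ENNReal.ofReal_one]
  · simp only [hform]
    exact (integrable_mul_exp_neg_mul_sq (by norm_num)).integrableOn
  · filter_upwards [ae_restrict_mem measurableSet_Ioi] with r (hr : 0 < r)
    positivity

lemma gaussianReal_prod_gaussianReal_eq_withDensity :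
    (gaussianReal 0 1).prod (gaussianReal 0 1) = volume.withDensity fun z : ℝ × ℝ ↦
        ENNReal.ofReal ((2 * π)⁻¹ * exp (-(z.1 ^ 2 + z.2 ^ 2) / 2)) := by
  rw [gaussianReal_of_var_ne_zero _ one_ne_zero, prod_withDensity (by fun_prop) (by fun_prop),
    Measure.volume_eq_prod]
  congr with z
  simp only [gaussianPDF, gaussianPDFReal, NNReal.coe_one, mul_one, sub_zero]
  rw [← ENNReal.ofReal_mul (by positivity), mul_mul_mul_comm, ← mul_inv, ← exp_add,
    Real.mul_self_sqrt (by positivity)]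
  ring_nf

lemma gaussianReal_prod_sector {A : Set (ℝ × ℝ)} (hA : MeasurableSet A) {a b : ℝ}
    (ha : -π ≤ a) (hb : b ≤ π)
    (hpolar : ∀ r θ, 0 < r → θ ∈ Ioo (-π) π → (polarCoord.symm (r, θ) ∈ A ↔ θ ∈ Ioo a b)) :
    (gaussianReal 0 1).prod (gaussianReal 0 1) A = ENNReal.ofReal ((b - a) / (2 * π)) := by
  set g : ℝ × ℝ → ℝ≥0∞ := fun z ↦ ENNReal.ofReal ((2 * π)⁻¹ * exp (-(z.1 ^ 2 + z.2 ^ 2) / 2))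
  have hsplit : ∀ p ∈ polarCoord.target, ENNReal.ofReal p.1 • A.indicator g (polarCoord.symm p)
      = ENNReal.ofReal (p.1 * exp (-p.1 ^ 2 / 2)) *
        (Ioo a b).indicator (fun _ ↦ ENNReal.ofReal (2 * π)⁻¹) p.2 := by
    rintro ⟨r, θ⟩ ⟨hr : 0 < r, hθ⟩
    by_cases hθab : θ ∈ Ioo a b
    · have hg : g (polarCoord.symm (r, θ)) = ENNReal.ofReal ((2 * π)⁻¹ * exp (-r ^ 2 / 2)) := by
        simp only [g, polarCoord_symm_apply, mul_pow]
        rw [← mul_add, cos_sq_add_sin_sq, mul_one]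
      rw [indicator_of_mem ((hpolar r θ hr hθ).2 hθab), indicator_of_mem hθab, hg, smul_eq_mul,
        ← ENNReal.ofReal_mul hr.le, ← ENNReal.ofReal_mul (by positivity)]
      ring_nf
    · rw [indicator_of_notMem (mt (hpolar r θ hr hθ).1 hθab), indicator_of_notMem hθab,
        smul_zero, mul_zero]
  calc (gaussianReal 0 1).prod (gaussianReal 0 1) A
      = ∫⁻ p in polarCoord.target, ENNReal.ofReal p.1 • A.indicator g (polarCoord.symm p) := by
        rw [lintegral_comp_polarCoord_symm, lintegral_indicator hA,
          gaussianReal_prod_gaussianReal_eq_withDensity, withDensity_apply _ hA]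
    _ = (∫⁻ r in Ioi 0, ENNReal.ofReal (r * exp (-r ^ 2 / 2))) *
          ∫⁻ θ in Ioo (-π) π, (Ioo a b).indicator (fun _ ↦ ENNReal.ofReal (2 * π)⁻¹) θ := by
        rw [setLIntegral_congr_fun polarCoord.open_target.measurableSet hsplit, polarCoord_target,
          Measure.volume_eq_prod, ← Measure.prod_restrict, lintegral_prod_mul
          (f := fun r ↦ ENNReal.ofReal (r * exp (-r ^ 2 / 2))) (by fun_prop)
          (measurable_const.indicator measurableSet_Ioo).aemeasurable]
    _ = ENNReal.ofReal ((b - a) / (2 * π)) := by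
        rw [lintegral_Ioi_mul_exp_neg_sq_div_two, one_mul,
          lintegral_indicator_const measurableSet_Ioo, Measure.restrict_apply measurableSet_Ioo,
          inter_eq_left.2 (Ioo_subset_Ioo ha hb), Real.volume_Ioo,
          ← ENNReal.ofReal_mul (by positivity)]
        ring_nf

lemma cos_pos_iff_of_abs_le {x : ℝ} (hx : |x| ≤ π + π / 2) :
    0 < cos x ↔ x ∈ Ioo (-(π / 2)) (π / 2) := by
  refine ⟨fun hcos ↦ ?_, cos_pos_of_mem_Ioo⟩
  rw [← cos_abs] at hcos
  have : |x| < π / 2 := by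
    by_contra! h
    exact (cos_nonpos_of_pi_div_two_le_of_le h hx).not_gt hcos
  exact ⟨by linarith [neg_abs_le x], by linarith [le_abs_self x]⟩

lemma polarCoord_symm_mem_wedge_iff {φ : ℝ} (hφ : φ ∈ Icc 0 π) {r θ : ℝ} (hr : 0 < r)
    (hθ : θ ∈ Ioo (-π) π) :
    polarCoord.symm (r, θ) ∈ {z : ℝ × ℝ | 0 < z.1 ∧ 0 < cos φ * z.1 + sin φ * z.2}
      ↔ θ ∈ Ioo (φ - π / 2) (π / 2) := by
  have hrot : cos φ * (r * cos θ) + sin φ * (r * sin θ) = r * cos (θ - φ) := by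
    rw [cos_sub]; ring
  simp only [polarCoord_symm_apply, mem_ofPred_eq, hrot, mul_pos_iff_of_pos_left hr]
  obtain ⟨hθ₁, hθ₂⟩ := hθ
  obtain ⟨hφ₁, hφ₂⟩ := hφ
  rw [cos_pos_iff_of_abs_le (abs_le.2 ⟨by linarith, by linarith⟩)]
  constructor
  · rintro ⟨⟨h₁, h₂⟩, hcos⟩
    rw [cos_pos_iff_of_abs_le (abs_le.2 ⟨by linarith, by linarith⟩)] at hcos
    exact ⟨by linarith [hcos.1], h₂⟩
  · rintro ⟨h₁, h₂⟩
    exact ⟨⟨by linarith, h₂⟩, cos_pos_of_mem_Ioo ⟨by linarith, by linarith⟩⟩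

lemma measurableSet_wedge (a b : ℝ) :
    MeasurableSet {z : ℝ × ℝ | 0 < z.1 ∧ 0 < a * z.1 + b * z.2} :=
  (measurableSet_lt measurable_const measurable_fst).inter
    (measurableSet_lt measurable_const
      ((measurable_fst.const_mul a).add (measurable_snd.const_mul b)))

lemma gaussianReal_prod_wedge {φ : ℝ} (hφ : φ ∈ Icc 0 π) :
    (gaussianReal 0 1).prod (gaussianReal 0 1)
      {z : ℝ × ℝ | 0 < z.1 ∧ 0 < cos φ * z.1 + sin φ * z.2}
      = ENNReal.ofReal ((π - φ) / (2 * π)) := by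
  rw [gaussianReal_prod_sector (a := φ - π / 2) (b := π / 2) (measurableSet_wedge _ _)
    (by linarith [hφ.1, pi_pos]) (by linarith [pi_pos])
    fun r θ hr hθ ↦ polarCoord_symm_mem_wedge_iff hφ hr hθ]
  ring_nf

section

variable {E : Type*} [NormedAddCommGroup E] [InnerProductSpace ℝ E]

lemma Orthonormal.norm_sum_smul {ι : Type*} [Fintype ι] {v : ι → E} (hv : Orthonormal ℝ v)
    (t : EuclideanSpace ℝ ι) : ‖∑ i, t i • v i‖ = ‖t‖ := by
  refine (sq_eq_sq₀ (norm_nonneg _) (norm_nonneg _)).1 ?_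
  rw [← real_inner_self_eq_norm_sq, hv.inner_sum, EuclideanSpace.real_norm_sq_eq]
  simp [sq]

variable [FiniteDimensional ℝ E]

lemma exists_unit_orthogonal (hE : 2 ≤ Module.finrank ℝ E) (x : E) :
    ∃ e : E, ‖e‖ = 1 ∧ ⟪x, e⟫_ℝ = 0 := by
  obtain ⟨z, hz, hz0⟩ : ∃ z ∈ (ℝ ∙ x)ᗮ, z ≠ 0 := by
    refine Submodule.exists_mem_ne_zero_of_ne_bot fun h ↦ ?_
    have := Submodule.finrank_add_finrank_orthogonal (ℝ ∙ x)
    rw [h, finrank_bot, add_zero] at this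
    have := finrank_span_le_card (R := ℝ) ({x} : Set E)
    simp only [toFinset_singleton, Finset.card_singleton] at this
    omega
  refine ⟨‖z‖⁻¹ • z, norm_smul_inv_norm hz0, ?_⟩
  rw [real_inner_smul_right, Submodule.mem_orthogonal_singleton_iff_inner_right.1 hz, mul_zero]

lemma exists_orthonormal_decomposition (hE : 2 ≤ Module.finrank ℝ E) {x y : E} (hx : ‖x‖ = 1)
    (hy : ‖y‖ = 1) :
    ∃ e : E, Orthonormal ℝ ![x, e] ∧ y = ⟪x, y⟫_ℝ • x + √(1 - ⟪x, y⟫_ℝ ^ 2) • e := by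
  set z := y - ⟪x, y⟫_ℝ • x
  have hxz : ⟪x, z⟫_ℝ = 0 := by
    simp [z, inner_sub_right, real_inner_smul_right, hx]
  have hz : ‖z‖ = √(1 - ⟪x, y⟫_ℝ ^ 2) := by
    have hz2 : ‖z‖ ^ 2 = 1 - ⟪x, y⟫_ℝ ^ 2 := by
      rw [norm_sub_sq_real, norm_smul, real_inner_smul_right, real_inner_comm, hx, hy,
        Real.norm_eq_abs, mul_one, sq_abs]
      ring
    rw [← hz2, Real.sqrt_sq (norm_nonneg _)]
  obtain ⟨e, he, hxe, hze⟩ : ∃ e : E, ‖e‖ = 1 ∧ ⟪x, e⟫_ℝ = 0 ∧ z = ‖z‖ • e := by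
    by_cases hz0 : z = 0
    · obtain ⟨e, he, hxe⟩ := exists_unit_orthogonal hE x
      exact ⟨e, he, hxe, by simp [hz0]⟩
    · refine ⟨‖z‖⁻¹ • z, norm_smul_inv_norm hz0, by rw [real_inner_smul_right, hxz, mul_zero], ?_⟩
      rw [smul_smul, mul_inv_cancel₀ (norm_ne_zero_iff.2 hz0), one_smul]
  refine ⟨e, by simp [hx, he, hxe], ?_⟩
  rw [← hz, ← hze, add_sub_cancel]

variable [MeasurableSpace E] [BorelSpace E]

lemma map_stdGaussian_inner_orthonormal {ι : Type*} [Fintype ι] {v : ι → E}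
    (hv : Orthonormal ℝ v) :
    (ProbabilityTheory.stdGaussian E).map (fun w ↦ WithLp.toLp 2 fun i ↦ ⟪v i, w⟫_ℝ)
      = ProbabilityTheory.stdGaussian (EuclideanSpace ℝ ι) := by
  refine Measure.ext_of_charFun (funext fun t ↦ ?_)
  have hinner (w : E) : ⟪WithLp.toLp 2 (fun i ↦ ⟪v i, w⟫_ℝ), t⟫_ℝ = ⟪w, ∑ i, t i • v i⟫_ℝ := by
    simp [PiLp.inner_apply, inner_sum, real_inner_smul_right, real_inner_comm, mul_comm]
  rw [charFun_apply, integral_map (by fun_prop) (by fun_prop)]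
  simp_rw [hinner]
  rw [← charFun_apply, charFun_stdGaussian, charFun_stdGaussian, hv.norm_sum_smul]

lemma map_stdGaussian_inner_pair {u v : E} (h : Orthonormal ℝ ![u, v]) :
    (ProbabilityTheory.stdGaussian E).map (fun w ↦ (⟪u, w⟫_ℝ, ⟪v, w⟫_ℝ))
      = (gaussianReal 0 1).prod (gaussianReal 0 1) := by
  have hcomp : (fun w ↦ (⟪u, w⟫_ℝ, ⟪v, w⟫_ℝ)) = (MeasurableEquiv.finTwoArrow ∘ WithLp.ofLp) ∘
      fun w ↦ WithLp.toLp 2 fun i ↦ ⟪![u, v] i, w⟫_ℝ :=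
    rfl
  rw [hcomp, ← Measure.map_map (by fun_prop) (by fun_prop), map_stdGaussian_inner_orthonormal h,
    ← map_pi_eq_stdGaussian, Measure.map_map (by fun_prop) (by fun_prop)]
  exact (measurePreserving_finTwoArrow _).map_eq

theorem stdGaussian_setOf_inner_pos_and_inner_pos (hE : 2 ≤ Module.finrank ℝ E) {x y : E}
    (hx : ‖x‖ = 1) (hy : ‖y‖ = 1) :
    ProbabilityTheory.stdGaussian E {w | 0 < ⟪w, x⟫_ℝ ∧ 0 < ⟪w, y⟫_ℝ}
      = ENNReal.ofReal ((π - arccos ⟪x, y⟫_ℝ) / (2 * π)) := by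
  obtain ⟨e, hxe, hy_eq⟩ := exists_orthonormal_decomposition hE hx hy
  have hxy : ⟪x, y⟫_ℝ ∈ Icc (-1) 1 :=
    abs_le.1 (by simpa [hx, hy] using abs_real_inner_le_norm x y)
  have hset : {w | 0 < ⟪w, x⟫_ℝ ∧ 0 < ⟪w, y⟫_ℝ} = (fun w ↦ (⟪x, w⟫_ℝ, ⟪e, w⟫_ℝ)) ⁻¹'
      {z | 0 < z.1 ∧ 0 < cos (arccos ⟪x, y⟫_ℝ) * z.1 + sin (arccos ⟪x, y⟫_ℝ) * z.2} := by
    ext w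
    rw [cos_arccos hxy.1 hxy.2, sin_arccos]
    conv_lhs => rw [hy_eq]
    simp only [mem_ofPred_eq, mem_preimage, inner_add_right, real_inner_smul_right,
      real_inner_comm x w, real_inner_comm e w]
  rw [hset, ← Measure.map_apply (by fun_prop) (measurableSet_wedge _ _),
    map_stdGaussian_inner_pair hxe, gaussianReal_prod_wedge ⟨arccos_nonneg _, arccos_le_pi _⟩]

end

theorem gaussian_orthant_measure (p : ℕ) (hp : 2 ≤ p)
    (x y : EuclideanSpace ℝ (Fin p)) (hx : ‖x‖ = 1) (hy : ‖y‖ = 1) :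
    _root_.stdGaussian p {w | 0 < (inner ℝ w x : ℝ) ∧ 0 < (inner ℝ w y : ℝ)}
      = ENNReal.ofReal ((π - Real.arccos (inner ℝ x y : ℝ)) / (2 * π)) := by
  rw [show _root_.stdGaussian p = ProbabilityTheory.stdGaussian _ from map_pi_eq_stdGaussian]
  exact stdGaussian_setOf_inner_pos_and_inner_pos (by simpa using hp) hx hy
end

section
/- Let p ≥ 2, let μ be the standard Gaussian measure on ℝ^p (the p-fold product of the real Gaussian N(0,1)), and let x, y ∈ ℝ^p be unit vectors. Then 2·∫ max(⟨w, x⟩, 0)·max(⟨w, y⟩, 0) dμ(w) = κ₁(⟨x, y⟩). -/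
open Real MeasureTheory ProbabilityTheory

/-
The pair `(⟪w, x⟫, ⟪w, y⟫)` is a centred Gaussian vector whose covariance is the Gram matrix of
`x` and `y`; comparing characteristic functions, it has the law of `(a, cos t * a + sin t * b)`
with `a, b` independent `N(0,1)` and `t = arccos ⟪x, y⟫`. In polar coordinates
`(a, b) = (r cos θ, r sin θ)` the integrand is `r² max(cos θ, 0) max(cos (θ - t), 0)`: the radial
integral of `r³ exp (-r² / 2)` is `2`, and the angular one is the integral of `cos θ cos (θ - t)`
over the arc `t - π/2 < θ < π/2` where both cosines are positive.
-/

open Set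
open scoped RealInnerProductSpace

lemma gaussianPDFReal_mul_gaussianPDFReal (a b : ℝ) :
    gaussianPDFReal 0 1 a * gaussianPDFReal 0 1 b = (2 * π)⁻¹ * exp (-(a ^ 2 + b ^ 2) / 2) := by
  have hsqrt : (√(2 * π))⁻¹ * (√(2 * π))⁻¹ = (2 * π)⁻¹ := by
    rw [← mul_inv, mul_self_sqrt (by positivity)]
  simp only [gaussianPDFReal_def, NNReal.coe_one, mul_one, sub_zero]
  rw [mul_mul_mul_comm, hsqrt, ← exp_add]
  ring_nf

lemma integral_gaussianReal_prod_eq_polar (f : ℝ × ℝ → ℝ) :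
    ∫ q, f q ∂(gaussianReal 0 1).prod (gaussianReal 0 1)
      = ∫ p in Ioi 0 ×ˢ Ioo (-π) π,
          (2 * π)⁻¹ * (p.1 * exp (-p.1 ^ 2 / 2)) * f (p.1 * cos p.2, p.1 * sin p.2) := by
  rw [gaussianReal_of_var_ne_zero 0 one_ne_zero,
    prod_withDensity (measurable_gaussianPDF 0 1) (measurable_gaussianPDF 0 1),
    ← Measure.volume_eq_prod, integral_withDensity_eq_integral_toReal_smul (by fun_prop)
      (ae_of_all _ fun _ => ENNReal.mul_lt_top gaussianPDF_lt_top gaussianPDF_lt_top),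
    ← integral_comp_polarCoord_symm]
  refine setIntegral_congr_fun (polarCoord.open_target.measurableSet) fun p _ => ?_
  have hr : (p.1 * cos p.2) ^ 2 + (p.1 * sin p.2) ^ 2 = p.1 ^ 2 := by
    linear_combination p.1 ^ 2 * sin_sq_add_cos_sq p.2
  simp only [polarCoord_symm_apply, ENNReal.toReal_mul, toReal_gaussianPDF,
    gaussianPDFReal_mul_gaussianPDFReal, hr, smul_eq_mul]
  ring

lemma integral_Ioi_pow_three_mul_exp_neg_sq_div_two :
    ∫ r in Ioi (0 : ℝ), r ^ 3 * exp (-r ^ 2 / 2) = 2 := by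
  have h := integral_rpow_mul_exp_neg_mul_rpow (p := 2) (q := 3) (b := 1 / 2)
    (by norm_num) (by norm_num) (by norm_num)
  have hΓ : Gamma ((3 + 1) / 2) = 1 := by norm_num [Gamma_two]
  rw [hΓ] at h
  norm_num at h
  convert h using 1
  refine setIntegral_congr_fun measurableSet_Ioi fun r _ => ?_
  norm_cast
  ring_nf

lemma max_cos_mul_max_cos_sub_eq_indicator {t θ : ℝ} (ht₀ : 0 ≤ t) (htπ : t ≤ π)
    (hθ : θ ∈ Ioo (-π) π) :
    max (cos θ) 0 * max (cos (θ - t)) 0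
      = (Ioo (t - π / 2) (π / 2)).indicator (fun θ => cos θ * cos (θ - t)) θ := by
  by_cases hmem : θ ∈ Ioo (t - π / 2) (π / 2)
  · have hc₁ : 0 < cos θ := cos_pos_of_mem_Ioo ⟨by linarith [hmem.1], hmem.2⟩
    have hc₂ : 0 < cos (θ - t) := cos_pos_of_mem_Ioo ⟨by linarith [hmem.1], by linarith [hmem.2]⟩
    rw [indicator_of_mem hmem, max_eq_left hc₁.le, max_eq_left hc₂.le]
  rw [indicator_of_notMem hmem]
  have hcos_neg : ∀ x, π / 2 ≤ -x → -x ≤ π + π / 2 → cos x ≤ 0 := fun x h₁ h₂ => by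
    simpa using cos_nonpos_of_pi_div_two_le_of_le h₁ h₂
  rcases not_and_or.mp hmem with h | h
  · rcases le_or_gt θ (-(π / 2)) with h' | h'
    · rw [max_eq_right (hcos_neg θ (by linarith) (by linarith [hθ.1])), zero_mul]
    · rw [max_eq_right (hcos_neg (θ - t) (by linarith) (by linarith)), mul_zero]
  · rw [max_eq_right (cos_nonpos_of_pi_div_two_le_of_le (not_lt.mp h) (by linarith [hθ.2])),
      zero_mul]

lemma integral_max_cos_mul_max_cos_sub {t : ℝ} (ht₀ : 0 ≤ t) (htπ : t ≤ π) :
    ∫ θ in Ioo (-π) π, max (cos θ) 0 * max (cos (θ - t)) 0 = (sin t + (π - t) * cos t) / 2 := by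
  have hsub : Ioo (t - π / 2) (π / 2) ⊆ Ioo (-π) π :=
    Ioo_subset_Ioo (by linarith [pi_pos]) (by linarith [pi_pos])
  rw [setIntegral_congr_fun measurableSet_Ioo
      (fun θ hθ => max_cos_mul_max_cos_sub_eq_indicator ht₀ htπ hθ),
    setIntegral_indicator measurableSet_Ioo, inter_eq_self_of_subset_right hsub,
    ← integral_Ioc_eq_integral_Ioo, ← intervalIntegral.integral_of_le (by linarith)]
  have hderiv : ∀ θ ∈ uIcc (t - π / 2) (π / 2),
      HasDerivAt (fun θ => (sin (2 * θ - t) / 2 + θ * cos t) / 2) (cos θ * cos (θ - t)) θ := by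
    intro θ _
    have h := ((((hasDerivAt_id θ).const_mul 2).sub_const t).sin.div_const 2).add
      ((hasDerivAt_id θ).mul_const (cos t)) |>.div_const 2
    refine h.congr_deriv ?_
    have hcos : cos t = cos θ * cos (θ - t) + sin θ * sin (θ - t) := by
      rw [← cos_sub, sub_sub_cancel]
    simp only [id, show 2 * θ - t = θ + (θ - t) by ring, cos_add, hcos]
    ring
  rw [intervalIntegral.integral_eq_sub_of_hasDerivAt hderiv
    (Continuous.intervalIntegrable (by fun_prop) _ _),
    show 2 * (π / 2) - t = π - t by ring, show 2 * (t - π / 2) - t = t - π by ring,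
    sin_pi_sub, sin_sub_pi]
  ring

lemma integral_max_mul_max_gaussianReal_prod {t : ℝ} (ht₀ : 0 ≤ t) (htπ : t ≤ π) :
    ∫ q, max q.1 0 * max (cos t * q.1 + sin t * q.2) 0
        ∂(gaussianReal 0 1).prod (gaussianReal 0 1)
      = (sin t + (π - t) * cos t) / (2 * π) := by
  have hpolar : ∀ p ∈ Ioi (0 : ℝ) ×ˢ Ioo (-π) π,
      (2 * π)⁻¹ * (p.1 * exp (-p.1 ^ 2 / 2)) * (max (p.1 * cos p.2) 0
          * max (cos t * (p.1 * cos p.2) + sin t * (p.1 * sin p.2)) 0)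
        = (2 * π)⁻¹ * (p.1 ^ 3 * exp (-p.1 ^ 2 / 2))
          * (max (cos p.2) 0 * max (cos (p.2 - t)) 0) := by
    rintro ⟨r, θ⟩ ⟨hr, -⟩
    have hrot : cos t * (r * cos θ) + sin t * (r * sin θ) = r * cos (θ - t) := by
      rw [cos_sub]; ring
    have hmax : ∀ c, max (r * c) 0 = r * max c 0 := fun c => by
      rw [mul_max_of_nonneg _ _ (le_of_lt hr), mul_zero]
    simp only [hrot, hmax]
    ring
  rw [integral_gaussianReal_prod_eq_polar, setIntegral_congr_fun
      (measurableSet_Ioi.prod measurableSet_Ioo) hpolar,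
    Measure.volume_eq_prod, ← Measure.prod_restrict,
    integral_prod_mul (f := fun r => (2 * π)⁻¹ * (r ^ 3 * exp (-r ^ 2 / 2)))
      (g := fun θ => max (cos θ) 0 * max (cos (θ - t)) 0),
    integral_const_mul, integral_Ioi_pow_three_mul_exp_neg_sq_div_two,
    integral_max_cos_mul_max_cos_sub ht₀ htπ]
  field_simp

section

variable {E : Type*} [NormedAddCommGroup E] [InnerProductSpace ℝ E]

lemma norm_smul_add_smul_sq (a b : ℝ) (x y : E) :
    ‖a • x + b • y‖ ^ 2 = a ^ 2 * ⟪x, x⟫ + 2 * a * b * ⟪x, y⟫ + b ^ 2 * ⟪y, y⟫ := by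
  rw [← real_inner_self_eq_norm_sq]
  simp only [inner_add_left, inner_add_right, real_inner_smul_left, real_inner_smul_right,
    real_inner_comm x y]
  ring

lemma comp_prod_innerSL (L : StrongDual ℝ (ℝ × ℝ)) (x y : E) :
    L.comp ((innerSL ℝ x).prod (innerSL ℝ y)) = innerSL ℝ (L (1, 0) • x + L (0, 1) • y) := by
  ext w
  have hpair : ((⟪x, w⟫, ⟪y, w⟫) : ℝ × ℝ) = ⟪x, w⟫ • (1, 0) + ⟪y, w⟫ • (0, 1) := by
    ext <;> simp
  simp only [ContinuousLinearMap.comp_apply, ContinuousLinearMap.prod_apply, innerSL_apply_apply]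
  rw [hpair, map_add, map_smul, map_smul, inner_add_left, real_inner_smul_left,
    real_inner_smul_left, smul_eq_mul, smul_eq_mul]
  ring

variable [FiniteDimensional ℝ E] [MeasurableSpace E] [BorelSpace E]

lemma map_inner_pair_stdGaussian_eq {F : Type*} [NormedAddCommGroup F] [InnerProductSpace ℝ F]
    [FiniteDimensional ℝ F] [MeasurableSpace F] [BorelSpace F] {x y : E} {x' y' : F}
    (hxx : ⟪x, x⟫ = ⟪x', x'⟫) (hxy : ⟪x, y⟫ = ⟪x', y'⟫) (hyy : ⟪y, y⟫ = ⟪y', y'⟫) :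
    (ProbabilityTheory.stdGaussian E).map (fun w => (⟪x, w⟫, ⟪y, w⟫))
      = (ProbabilityTheory.stdGaussian F).map (fun w => (⟪x', w⟫, ⟪y', w⟫)) := by
  apply Measure.ext_of_charFunDual
  ext L
  have hE : (fun w => (⟪x, w⟫, ⟪y, w⟫)) = ⇑((innerSL ℝ x).prod (innerSL ℝ y)) := rfl
  have hF : (fun w => (⟪x', w⟫, ⟪y', w⟫)) = ⇑((innerSL ℝ x').prod (innerSL ℝ y')) := rfl
  rw [hE, hF, charFunDual_map, charFunDual_map, charFunDual_stdGaussian, charFunDual_stdGaussian,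
    comp_prod_innerSL, comp_prod_innerSL, innerSL_apply_norm, innerSL_apply_norm,
    ← Complex.ofReal_pow, ← Complex.ofReal_pow, norm_smul_add_smul_sq, norm_smul_add_smul_sq,
    hxx, hxy, hyy]

lemma map_inner_pair_stdGaussian_eq_map_gaussianReal_prod {x y : E} (hx : ‖x‖ = 1) (hy : ‖y‖ = 1)
    {t : ℝ} (hxy : ⟪x, y⟫ = cos t) :
    (ProbabilityTheory.stdGaussian E).map (fun w => (⟪x, w⟫, ⟪y, w⟫))
      = ((gaussianReal 0 1).prod (gaussianReal 0 1)).map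
          (fun q => (q.1, cos t * q.1 + sin t * q.2)) := by
  set e₀ : EuclideanSpace ℝ (Fin 2) := EuclideanSpace.single 0 1
  set e₁ : EuclideanSpace ℝ (Fin 2) := EuclideanSpace.single 1 1
  have he₀ : ⟪x, x⟫ = ⟪e₀, e₀⟫ := by
    simp [e₀, hx]
  have he₀₁ : ⟪x, y⟫ = ⟪e₀, cos t • e₀ + sin t • e₁⟫ := by
    simp [e₀, e₁, hxy, inner_add_right, EuclideanSpace.inner_single_left]
  have he₁ : ⟪y, y⟫ = ⟪cos t • e₀ + sin t • e₁, cos t • e₀ + sin t • e₁⟫ := by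
    rw [real_inner_self_eq_norm_sq, real_inner_self_eq_norm_sq, norm_smul_add_smul_sq, hy]
    simp [e₀, e₁, EuclideanSpace.inner_single_left]
  rw [map_inner_pair_stdGaussian_eq he₀ he₀₁ he₁,
    ← map_pi_eq_stdGaussian, Measure.map_map (by fun_prop) (by fun_prop),
    ← (measurePreserving_finTwoArrow (gaussianReal 0 1)).map_eq,
    Measure.map_map (by fun_prop) (by fun_prop)]
  congr 1
  funext v
  simp [e₀, e₁, inner_add_left, real_inner_smul_left, EuclideanSpace.inner_single_left]

lemma two_mul_integral_max_inner_mul_max_inner_stdGaussian {x y : E} (hx : ‖x‖ = 1)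
    (hy : ‖y‖ = 1) :
    2 * ∫ w, max ⟪w, x⟫ 0 * max ⟪w, y⟫ 0 ∂(ProbabilityTheory.stdGaussian E) = kappa1 ⟪x, y⟫ := by
  set u := ⟪x, y⟫
  have hu : |u| ≤ 1 := by simpa [hx, hy] using abs_real_inner_le_norm x y
  obtain ⟨hu₁, hu₂⟩ := abs_le.mp hu
  have hcos : ⟪x, y⟫ = cos (arccos u) := (cos_arccos hu₁ hu₂).symm
  have hrelu : Measurable fun q : ℝ × ℝ => max q.1 0 * max q.2 0 := by fun_prop
  calc 2 * ∫ w, max ⟪w, x⟫ 0 * max ⟪w, y⟫ 0 ∂(ProbabilityTheory.stdGaussian E)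
      = 2 * ∫ q, max q.1 0 * max q.2 0
          ∂((ProbabilityTheory.stdGaussian E).map fun w => (⟪x, w⟫, ⟪y, w⟫)) := by
        rw [integral_map (by fun_prop) hrelu.aestronglyMeasurable]
        simp only [real_inner_comm]
    _ = 2 * ∫ q, max q.1 0 * max (cos (arccos u) * q.1 + sin (arccos u) * q.2) 0
          ∂(gaussianReal 0 1).prod (gaussianReal 0 1) := by
        rw [map_inner_pair_stdGaussian_eq_map_gaussianReal_prod hx hy hcos,
          integral_map (by fun_prop) hrelu.aestronglyMeasurable]
    _ = kappa1 u := by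
        rw [integral_max_mul_max_gaussianReal_prod (arccos_nonneg u) (arccos_le_pi u), kappa1,
          cos_arccos hu₁ hu₂, sin_arccos]
        field_simp
        ring

end

lemma stdGaussian_eq_stdGaussian_euclideanSpace (p : ℕ) :
    stdGaussian p = ProbabilityTheory.stdGaussian (EuclideanSpace ℝ (Fin p)) :=
  map_pi_eq_stdGaussian

theorem arc_cosine_one_kernel_general (p : ℕ)
    (x y : EuclideanSpace ℝ (Fin p)) (hx : ‖x‖ = 1) (hy : ‖y‖ = 1) :
    2 * ∫ w, max (inner ℝ w x : ℝ) 0 * max (inner ℝ w y : ℝ) 0 ∂(stdGaussian p)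
      = kappa1 (inner ℝ x y : ℝ) := by
  rw [stdGaussian_eq_stdGaussian_euclideanSpace]
  exact two_mul_integral_max_inner_mul_max_inner_stdGaussian hx hy

theorem arc_cosine_one_kernel (p : ℕ) (hp : 2 ≤ p)
    (x y : EuclideanSpace ℝ (Fin p)) (hx : ‖x‖ = 1) (hy : ‖y‖ = 1) :
    2 * ∫ w, max (inner ℝ w x : ℝ) 0 * max (inner ℝ w y : ℝ) 0 ∂(stdGaussian p)
      = kappa1 (inner ℝ x y : ℝ) :=
  arc_cosine_one_kernel_general p x y hx hy
end
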